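/- arXiv:0803.0864 — 3 statements merged into one kernel-verified Lean document; each statement's English description precedes it below -/
import Mathlib

section
/- For every integer r ≥ 3, (r!)^{1/r} · ((r-2)!)^{1/(r-2)} < ((r-1)!)^{2/(r-1)}. -/
/-!
Writing `a n = log (n!) / n`, the claim is the strict concavity `a (m + 2) + a m < 2 a (m + 1)`.
Clearing denominators and using `log (m + 2)! = log (m + 1)! + log (m + 2)` reduces it, with
`n = m + 1`, to `2 log n! < n ((n + 1) log n - (n - 1) log (n + 1))`. This follows from the
AM-GM bound `n! ≤ ((n + 1) / 2) ^ n` (pair `k` with `n + 1 - k`) together with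
`(1 + 1 / n) ^ (n + 1) < 4` for `n ≥ 2`.
-/

open Real Finset
open scoped Nat

theorem Nat.two_pow_mul_factorial_le_pow (n : ℕ) : 2 ^ n * n ! ≤ (n + 1) ^ n := by
  have pair_le (k : ℕ) (hk : k ∈ range n) : 4 * ((k + 1) * (n - k)) ≤ (n + 1) ^ 2 := by
    obtain ⟨j, rfl⟩ : ∃ j, n = k + 1 + j := ⟨n - k - 1, by have := mem_range.1 hk; omega⟩
    rw [show k + 1 + j - k = j + 1 by omega]
    nlinarith [sq_nonneg ((k : ℤ) - j)]
  have reflect : ∏ k ∈ range n, (n - k) = n ! := by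
    rw [← prod_range_add_one_eq_factorial, ← prod_range_reflect]
    exact prod_congr rfl fun k hk => by have := mem_range.1 hk; omega
  rw [← Nat.pow_le_pow_iff_left two_ne_zero]
  calc (2 ^ n * n !) ^ 2 = ∏ k ∈ range n, 4 * ((k + 1) * (n - k)) := by
        rw [prod_mul_distrib, prod_mul_distrib, prod_const, card_range, reflect,
          prod_range_add_one_eq_factorial, mul_pow, ← pow_mul, mul_comm n 2, pow_mul]
        norm_num
        ring
    _ ≤ ∏ _k ∈ range n, (n + 1) ^ 2 := prod_le_prod (fun _ _ => Nat.zero_le _) pair_le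
    _ = ((n + 1) ^ n) ^ 2 := by rw [prod_const, card_range, ← pow_mul, ← pow_mul, mul_comm]

theorem log_factorial_le (n : ℕ) : log n ! ≤ n * (log (n + 1) - log 2) := by
  have h := (Nat.cast_le (α := ℝ)).2 (Nat.two_pow_mul_factorial_le_pow n)
  push_cast at h
  have h' := log_le_log (by positivity) h
  rw [log_mul (by positivity) (by positivity), log_pow, log_pow] at h'
  linarith

theorem add_one_mul_log_add_one_sub_log_lt {n : ℕ} (hn : 2 ≤ n) :
    (n + 1) * (log (n + 1) - log n) < 2 * log 2 := by
  rcases hn.eq_or_lt with rfl | hn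
  · have h : log (3 ^ 3) < log (2 ^ 5) := log_lt_log (by norm_num) (by norm_num)
    rw [log_pow, log_pow] at h
    push_cast at h
    norm_num
    linarith
  · have hn : (3 : ℝ) ≤ n := by exact_mod_cast hn
    have hlog : log (n + 1) - log n ≤ 1 / n := by
      rw [← log_div (by positivity) (by positivity)]
      exact (log_le_sub_one_of_pos (by positivity)).trans_eq (by field_simp; ring)
    calc (n + 1) * (log (n + 1) - log n) ≤ (n + 1) * (1 / n) := by gcongr
      _ = 1 + 1 / n := by field_simp
      _ ≤ 1 + 1 / 3 := by gcongr
      _ < 2 * log 2 := by linarith [log_two_gt_d9]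

theorem two_mul_log_factorial_lt {n : ℕ} (hn : 2 ≤ n) :
    2 * log n ! < n * ((n + 1) * log n - (n - 1) * log (n + 1)) := by
  have hn0 : (0 : ℝ) < n := by positivity
  have h := mul_lt_mul_of_pos_left (add_one_mul_log_add_one_sub_log_lt hn) hn0
  nlinarith [log_factorial_le n]

theorem log_factorial_succ (n : ℕ) : log (n + 1)! = log n ! + log (n + 1) := by
  rw [Nat.factorial_succ, Nat.cast_mul, log_mul (by positivity) (by positivity), add_comm]
  push_cast
  rfl

noncomputable def logFactorialMean (n : ℕ) : ℝ := log n ! / n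

theorem logFactorialMean_add_two_add_lt {m : ℕ} (hm : 0 < m) :
    logFactorialMean (m + 2) + logFactorialMean m < 2 * logFactorialMean (m + 1) := by
  have key := two_mul_log_factorial_lt (n := m + 1) (by omega)
  have succ_succ : log (m + 2)! = log (m + 1)! + log (m + 2) := by
    rw [log_factorial_succ (m + 1)]
    push_cast
    rw [add_assoc, one_add_one_eq_two]
  have pred : log m ! = log (m + 1)! - log (m + 1) := by
    rw [log_factorial_succ m, add_sub_cancel_right]
  have hm₀ : (0 : ℝ) < m := by exact_mod_cast hm
  simp only [logFactorialMean, succ_succ, pred]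
  push_cast at key ⊢
  rw [add_assoc, one_add_one_eq_two] at key
  rw [div_add_div _ _ (by positivity) hm₀.ne', ← mul_div_assoc,
    div_lt_div_iff₀ (by positivity) (by positivity)]
  linear_combination key

theorem factorial_rpow_div_eq_exp (n : ℕ) (c : ℝ) :
    (n ! : ℝ) ^ (c / n) = exp (c * logFactorialMean n) := by
  rw [rpow_def_of_pos (by positivity), logFactorialMean]
  ring_nf

theorem factorial_root_log_convex (r : ℕ) (hr : 3 ≤ r) :
    (r.factorial : ℝ) ^ ((1 : ℝ) / r) * ((r - 2).factorial : ℝ) ^ ((1 : ℝ) / ((r : ℝ) - 2)) <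
      ((r - 1).factorial : ℝ) ^ ((2 : ℝ) / ((r : ℝ) - 1)) := by
  obtain ⟨m, rfl⟩ : ∃ m, r = m + 2 := ⟨r - 2, by omega⟩
  have cast_sub_two : ((m + 2 : ℕ) : ℝ) - 2 = (m : ℝ) := by push_cast; ring
  have cast_sub_one : ((m + 2 : ℕ) : ℝ) - 1 = ((m + 1 : ℕ) : ℝ) := by push_cast; ring
  rw [cast_sub_two, cast_sub_one, Nat.add_sub_cancel, show m + 2 - 1 = m + 1 by omega]
  simp only [factorial_rpow_div_eq_exp, ← exp_add, exp_lt_exp, one_mul]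
  exact logFactorialMean_add_two_add_lt (by omega)
end

section
/- For every integer r ≥ 3, the inequality (r!)^{(r-1)(r-2)} · ((r-2)!)^{r(r-1)} < ((r-1)!)^{2r(r-2)} holds. -/
/-- Binomial-style bound: `(a+1)^n ≥ a^n + n·a^(n-1)`. -/
lemma binom_aux (a : ℕ) : ∀ n : ℕ, a ^ n + n * a ^ (n - 1) ≤ (a + 1) ^ n := by
  intro n
  induction n with
  | zero => simp
  | succ n ih =>
    have h1 : (a ^ n + n * a ^ (n - 1)) * (a + 1) ≤ (a + 1) ^ n * (a + 1) :=
      Nat.mul_le_mul ih (le_refl _)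
    have h2 : a ^ (n + 1) + (n + 1) * a ^ n ≤ (a ^ n + n * a ^ (n - 1)) * (a + 1) := by
      cases n with
      | zero => simp [pow_succ]
      | succ m =>
        simp only [Nat.succ_sub_one]
        have hs1 : a ^ (m + 2) = a ^ (m + 1) * a := pow_succ a (m + 1)
        have hs2 : a ^ (m + 1) = a ^ m * a := pow_succ a m
        nlinarith [Nat.zero_le (a ^ m), Nat.zero_le (a ^ (m + 1))]
    calc a ^ (n + 1) + (n + 1) * a ^ n
        ≤ (a ^ n + n * a ^ (n - 1)) * (a + 1) := h2
      _ ≤ (a + 1) ^ n * (a + 1) := h1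
      _ = (a + 1) ^ (n + 1) := (pow_succ _ _).symm

lemma two_mul_pow (k : ℕ) : 2 * (k + 1) ^ (k + 1) ≤ (k + 2) ^ (k + 1) := by
  have h := binom_aux (k + 1) (k + 1)
  simp only [Nat.succ_sub_one] at h
  have hs : (k + 1) ^ (k + 1) = (k + 1) ^ k * (k + 1) := pow_succ _ _
  calc 2 * (k + 1) ^ (k + 1) = (k + 1) ^ (k + 1) + (k + 1) * (k + 1) ^ k := by
        rw [hs]; ring
    _ ≤ (k + 1 + 1) ^ (k + 1) := h
    _ = (k + 2) ^ (k + 1) := by norm_num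

/-- `k! · 2^k < (k+1)^k` for `k ≥ 2`. -/
lemma fact_two_pow_lt (k : ℕ) (hk : 2 ≤ k) : k.factorial * 2 ^ k < (k + 1) ^ k := by
  induction k with
  | zero => omega
  | succ k ih =>
    rcases Nat.lt_or_ge k 2 with h | h
    · interval_cases k
      · omega
      · norm_num [Nat.factorial]
    · have ihk := ih h
      calc (k + 1).factorial * 2 ^ (k + 1)
          = 2 * (k + 1) * (k.factorial * 2 ^ k) := by
            rw [Nat.factorial_succ]; ring
        _ < 2 * (k + 1) * ((k + 1) ^ k) := by
            have hpos : 0 < 2 * (k + 1) := by positivity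
            exact (Nat.mul_lt_mul_left hpos).mpr ihk
        _ = 2 * (k + 1) ^ (k + 1) := by rw [pow_succ]; ring
        _ ≤ (k + 2) ^ (k + 1) := two_mul_pow k

/-- `(m+1)^m ≤ 4·m^m` for `m ≥ 1`, via `(1+1/m)^m ≤ e < 4`. -/
lemma succ_pow_le (m : ℕ) (hm : 1 ≤ m) : (m + 1) ^ m ≤ 4 * m ^ m := by
  have hm0 : (0 : ℝ) < m := by exact_mod_cast hm
  have h1 : (1 : ℝ) + 1 / m ≤ Real.exp (1 / m) := by
    have := Real.add_one_le_exp (1 / (m : ℝ))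
    linarith
  have h2 : ((1 : ℝ) + 1 / m) ^ m ≤ Real.exp (1 / m) ^ m :=
    pow_le_pow_left₀ (by positivity) h1 m
  have h3 : Real.exp (1 / (m : ℝ)) ^ m = Real.exp 1 := by
    rw [← Real.exp_nat_mul]
    congr 1
    field_simp
  have hb : ((m : ℝ) + 1) ^ m = ((1 + 1 / m) * m) ^ m := by
    congr 1
    field_simp
  have h4 : ((m : ℝ) + 1) ^ m ≤ Real.exp 1 * m ^ m := by
    rw [hb, mul_pow]
    have := mul_le_mul_of_nonneg_right (h3 ▸ h2) (by positivity : (0:ℝ) ≤ (m:ℝ) ^ m)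
    linarith
  have h5 : Real.exp 1 < 4 := by
    have := Real.exp_one_lt_d9
    linarith
  have h6 : ((m : ℝ) + 1) ^ m ≤ 4 * (m : ℝ) ^ m := by
    nlinarith [pow_pos hm0 m]
  exact_mod_cast h6

/-- Reduced inequality. -/
lemma reduced (n : ℕ) (hn : 1 ≤ n) :
    (n + 3) ^ ((n + 2) * (n + 1)) * (n + 1).factorial ^ 2 <
      (n + 2) ^ ((n + 1) * (n + 4)) := by
  have hA : (n + 3) ^ ((n + 2) * (n + 1)) ≤ 4 ^ (n + 1) * (n + 2) ^ ((n + 2) * (n + 1)) := by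
    have h := succ_pow_le (n + 2) (by omega)
    calc (n + 3) ^ ((n + 2) * (n + 1)) = ((n + 3) ^ (n + 2)) ^ (n + 1) := by
          rw [← pow_mul]
      _ ≤ (4 * (n + 2) ^ (n + 2)) ^ (n + 1) := Nat.pow_le_pow_left h _
      _ = 4 ^ (n + 1) * (n + 2) ^ ((n + 2) * (n + 1)) := by
          rw [mul_pow, ← pow_mul]
  have hD : (n + 1).factorial ^ 2 * 4 ^ (n + 1) < (n + 2) ^ (2 * (n + 1)) := by
    have hd := fact_two_pow_lt (n + 1) (by omega)
    have hsq : (n + 1).factorial ^ 2 * 4 ^ (n + 1) = ((n + 1).factorial * 2 ^ (n + 1)) ^ 2 := by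
      rw [mul_pow]
      congr 1
      rw [show (4:ℕ) = 2 ^ 2 from rfl, ← pow_mul, ← pow_mul]
      congr 1
      ring
    rw [hsq, show (n + 2) ^ (2 * (n + 1)) = ((n + 2) ^ (n + 1)) ^ 2 by
      rw [← pow_mul]; congr 1; ring]
    exact Nat.pow_lt_pow_left hd (by norm_num)
  calc (n + 3) ^ ((n + 2) * (n + 1)) * (n + 1).factorial ^ 2
      ≤ (4 ^ (n + 1) * (n + 2) ^ ((n + 2) * (n + 1))) * (n + 1).factorial ^ 2 :=
        Nat.mul_le_mul hA (le_refl _)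
    _ = ((n + 1).factorial ^ 2 * 4 ^ (n + 1)) * (n + 2) ^ ((n + 2) * (n + 1)) := by ring
    _ < (n + 2) ^ (2 * (n + 1)) * (n + 2) ^ ((n + 2) * (n + 1)) := by
        have hp : 0 < (n + 2) ^ ((n + 2) * (n + 1)) := by positivity
        exact (Nat.mul_lt_mul_right hp).mpr hD
    _ = (n + 2) ^ ((n + 1) * (n + 4)) := by
        rw [← pow_add]
        congr 1
        ring

theorem factorial_pow_ineq (r : ℕ) (hr : 3 ≤ r) :
    r.factorial ^ ((r - 1) * (r - 2)) * (r - 2).factorial ^ (r * (r - 1)) <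
      (r - 1).factorial ^ (2 * r * (r - 2)) := by
  obtain ⟨n, rfl⟩ : ∃ n, r = n + 3 := ⟨r - 3, by omega⟩
  have e1 : n + 3 - 1 = n + 2 := rfl
  have e2 : n + 3 - 2 = n + 1 := rfl
  rw [e1, e2]
  rcases Nat.eq_zero_or_pos n with rfl | hn
  · decide
  set F := (n + 1).factorial with hF
  have hFpos : 0 < F := Nat.factorial_pos _
  have f2 : (n + 2).factorial = (n + 2) * F := Nat.factorial_succ _
  have f3 : (n + 3).factorial = (n + 3) * ((n + 2) * F) := by
    rw [Nat.factorial_succ, f2]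
  rw [f2, f3]
  have key := reduced n hn
  have hM : 0 < F ^ (2 * (n + 3) * (n + 1)) * (n + 2) ^ ((n + 2) * (n + 1)) := by positivity
  have main := (Nat.mul_lt_mul_right hM).mpr key
  have hFe : F ^ ((n + 2) * (n + 1)) * F ^ ((n + 3) * (n + 2)) =
      F ^ 2 * F ^ (2 * (n + 3) * (n + 1)) := by
    rw [← pow_add, ← pow_add]; congr 1; ring
  have h2e : (n + 2) ^ ((n + 1) * (n + 4)) * (n + 2) ^ ((n + 2) * (n + 1)) =
      (n + 2) ^ (2 * (n + 3) * (n + 1)) := by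
    rw [← pow_add]; congr 1; ring
  calc ((n + 3) * ((n + 2) * F)) ^ ((n + 2) * (n + 1)) * F ^ ((n + 3) * (n + 2))
      = (n + 3) ^ ((n + 2) * (n + 1)) * (n + 2) ^ ((n + 2) * (n + 1)) *
          (F ^ ((n + 2) * (n + 1)) * F ^ ((n + 3) * (n + 2))) := by
        rw [mul_pow, mul_pow]; ring
    _ = (n + 3) ^ ((n + 2) * (n + 1)) * (n + 2) ^ ((n + 2) * (n + 1)) *
          (F ^ 2 * F ^ (2 * (n + 3) * (n + 1))) := by rw [hFe]
    _ = (n + 3) ^ ((n + 2) * (n + 1)) * F ^ 2 *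
          (F ^ (2 * (n + 3) * (n + 1)) * (n + 2) ^ ((n + 2) * (n + 1))) := by ring
    _ < (n + 2) ^ ((n + 1) * (n + 4)) *
          (F ^ (2 * (n + 3) * (n + 1)) * (n + 2) ^ ((n + 2) * (n + 1))) := main
    _ = (n + 2) ^ ((n + 1) * (n + 4)) * (n + 2) ^ ((n + 2) * (n + 1)) *
          F ^ (2 * (n + 3) * (n + 1)) := by ring
    _ = (n + 2) ^ (2 * (n + 3) * (n + 1)) * F ^ (2 * (n + 3) * (n + 1)) := by rw [h2e]
    _ = ((n + 2) * F) ^ (2 * (n + 3) * (n + 1)) := (mul_pow _ _ _).symm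
end

section
/- Let A = [a_{ij}] be a symmetric (0,1) matrix of size 2n×2n with zero diagonal, and let r_i denote the i-th row sum of A. Then for each index i, (hafn A)^{hafn A} ≤ r_i^{hafn A} · Π_{j : a_{ij}=1} (hafn A(i,j))^{hafn A(i,j)}, with the convention 0^0 = 1. -/
/-- The hafnian of an `m × m` real matrix (intended for even `m`):
`hafn A = (1/((m/2)! 2^(m/2))) ∑_σ ∏_k A (σ(2k)) (σ(2k+1))`,
which for symmetric `A` of even order equals the sum over all perfect
matchings of `K_m` of the products of the corresponding entries. -/
noncomputable def hafn {m : ℕ} (A : Matrix (Fin m) (Fin m) ℝ) : ℝ :=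
  (∑ σ : Equiv.Perm (Fin m), ∏ k : Fin (m / 2),
      A (σ ⟨2 * k.1, by omega⟩) (σ ⟨2 * k.1 + 1, by have := k.2; omega⟩)) /
    ((m / 2).factorial * 2 ^ (m / 2))

/-- The matrix obtained from `A` by deleting the rows and columns `i` and `j`. -/
noncomputable def delTwo {m : ℕ} (A : Matrix (Fin m) (Fin m) ℝ) (i j : Fin m)
    (h : i ≠ j) : Matrix (Fin (m - 2)) (Fin (m - 2)) ℝ :=
  A.submatrix (({i, j}ᶜ : Finset (Fin m)).orderEmbOfFin
      (by
        rw [Finset.card_compl, Finset.card_insert_of_notMem (by simpa using h),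
          Finset.card_singleton, Fintype.card_fin]))
    (({i, j}ᶜ : Finset (Fin m)).orderEmbOfFin
      (by
        rw [Finset.card_compl, Finset.card_insert_of_notMem (by simpa using h),
          Finset.card_singleton, Fintype.card_fin]))

/-
Expanding along row `i`, `hafn A = ∑ j, a_ij hafn A(i,j)`. For a `(0,1)` matrix this writes
`hafn A` as the sum of the `r_i` nonnegative numbers `t_j = hafn A(i,j)` with `a_ij = 1`, and
Jensen's inequality for the convex function `x log x` gives `(∑ t)^(∑ t) ≤ r^(∑ t) ∏ t^t`.

The row expansion is read off the permutation formula `∑_σ ∏_k a_{σ(2k) σ(2k+1)}`. Permuting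
the pairs `{2k, 2k+1}`, and swapping inside them (`A` is symmetric), leaves each summand fixed
and moves any position to any other, so the permutations with `σ p = i` contribute the same for
every `p`. For `p = 0`, peeling off `σ 0 = i` and `σ 1 = j` with `Equiv.Perm.decomposeFin`
leaves the hafnian of `A(i,j)`.
-/

open Finset Equiv

section

open Real

variable {ι : Type*} (s : Finset ι) {t : ι → ℝ}

lemma Finset.sum_mul_log_sum_le (ht : ∀ j ∈ s, 0 ≤ t j) :
    (∑ j ∈ s, t j) * log (∑ j ∈ s, t j) ≤
      (∑ j ∈ s, t j) * log #s + ∑ j ∈ s, t j * log (t j) := by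
  rcases s.eq_empty_or_nonempty with rfl | hs
  · simp
  set T := ∑ j ∈ s, t j
  have hc : (0 : ℝ) < #s := by exact_mod_cast hs.card_pos
  have jensen : T / #s * log (T / #s) ≤ (∑ j ∈ s, t j * log (t j)) / #s := by
    have := convexOn_mul_log.map_sum_le (t := s) (w := fun _ => (#s : ℝ)⁻¹) (p := t)
      (fun _ _ => by positivity) (by simp [hc.ne']) ht
    simp only [smul_eq_mul] at this
    rwa [← mul_sum, ← mul_sum, inv_mul_eq_div, inv_mul_eq_div] at this
  have hlog : T * log (T / #s) = T * log T - T * log #s := by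
    rcases eq_or_ne T 0 with hT | hT
    · simp [hT]
    · rw [log_div hT hc.ne', mul_sub]
  rw [div_mul_eq_mul_div, div_le_div_iff_of_pos_right hc, hlog] at jensen
  linarith

lemma Real.rpow_self_eq_exp {x : ℝ} (hx : 0 ≤ x) : x ^ x = exp (x * log x) := by
  rcases hx.eq_or_lt with rfl | hx
  · simp
  · rw [rpow_def_of_pos hx, mul_comm]

lemma Finset.sum_rpow_sum_le (ht : ∀ j ∈ s, 0 ≤ t j) :
    (∑ j ∈ s, t j) ^ (∑ j ∈ s, t j) ≤
      (#s : ℝ) ^ (∑ j ∈ s, t j) * ∏ j ∈ s, t j ^ t j := by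
  have hcard : (#s : ℝ) ^ (∑ j ∈ s, t j) = exp ((∑ j ∈ s, t j) * log #s) := by
    rcases s.eq_empty_or_nonempty with rfl | hs
    · simp
    · rw [rpow_def_of_pos (by exact_mod_cast hs.card_pos), mul_comm]
  rw [rpow_self_eq_exp (sum_nonneg ht), hcard,
    prod_congr rfl fun j hj => rpow_self_eq_exp (ht j hj), ← exp_sum, ← exp_add, exp_le_exp]
  exact sum_mul_log_sum_le s ht

end

lemma hafn_submatrix_perm {m : ℕ} (A : Matrix (Fin m) (Fin m) ℝ) (π : Perm (Fin m)) :
    hafn (A.submatrix π π) = hafn A := by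
  unfold hafn
  congr 1
  exact Fintype.sum_equiv (Equiv.mulLeft π) _ _ fun _ => rfl

lemma hafn_submatrix_eq_of_range_eq {ι : Type*} {m m' : ℕ} (A : Matrix ι ι ℝ)
    {f : Fin m → ι} {g : Fin m' → ι} (hf : f.Injective) (hg : g.Injective)
    (h : Set.range f = Set.range g) : hafn (A.submatrix f f) = hafn (A.submatrix g g) := by
  obtain rfl : m = m' := by
    simpa [Nat.card_range_of_injective hf, Nat.card_range_of_injective hg] using
      congrArg (fun s : Set ι => Nat.card s) h
  set π := ((Equiv.ofInjective f hf).trans (Equiv.setCongr h)).trans (Equiv.ofInjective g hg).symm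
  have hπ : g ∘ π = f := funext fun x => Equiv.apply_ofInjective_symm hg _
  rw [← hafn_submatrix_perm (A.submatrix g g) π, Matrix.submatrix_submatrix, hπ]

lemma Fin.sum_univ_eq_add_sum_swap_zero_succ {M : Type*} [AddCommMonoid M] {m : ℕ}
    (i : Fin (m + 1)) (f : Fin (m + 1) → M) :
    ∑ j, f j = f i + ∑ w : Fin m, f (swap 0 i w.succ) := by
  rw [← Equiv.sum_comp (swap 0 i), Fin.sum_univ_succ, swap_apply_left]

def pairEquiv (n : ℕ) : Fin n × Fin 2 ≃ Fin (2 * n) :=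
  finProdFinEquiv.trans (finCongr (Nat.mul_comm n 2))

@[simp]
lemma pairEquiv_val {n : ℕ} (k : Fin n) (b : Fin 2) : (pairEquiv n (k, b) : ℕ) = 2 * k + b := by
  simp [pairEquiv]; ring

lemma pairEquiv_zero (n : ℕ) (b : Fin 2) : pairEquiv (n + 1) (0, b) = ⟨b, by omega⟩ := by
  ext; simp

lemma pairEquiv_succ {n : ℕ} (k : Fin n) (b : Fin 2) :
    pairEquiv (n + 1) (k.succ, b) = (pairEquiv n (k, b)).succ.succ := by
  ext; simp; ring

noncomputable def pairProd {n : ℕ} (A : Matrix (Fin (2 * n)) (Fin (2 * n)) ℝ)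
    (σ : Perm (Fin (2 * n))) : ℝ :=
  ∏ k, A (σ (pairEquiv n (k, 0))) (σ (pairEquiv n (k, 1)))

noncomputable def hafnSum {n : ℕ} (A : Matrix (Fin (2 * n)) (Fin (2 * n)) ℝ) : ℝ :=
  ∑ σ, pairProd A σ

lemma hafn_eq_hafnSum_div {n : ℕ} (A : Matrix (Fin (2 * n)) (Fin (2 * n)) ℝ) :
    hafn A = hafnSum A / (n.factorial * 2 ^ n) := by
  have hn : 2 * n / 2 = n := by omega
  rw [hafn, hafnSum]
  congr 1
  · refine sum_congr rfl fun σ _ => Fintype.prod_equiv (finCongr hn) _ _ fun k => ?_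
    congr 2 <;> ext <;> simp
  · simp only [hn]

lemma pairProd_mul_permCongr {n : ℕ} {A : Matrix (Fin (2 * n)) (Fin (2 * n)) ℝ} (hA : A.IsSymm)
    (σ : Perm (Fin (2 * n))) (π : Perm (Fin n)) (β : Perm (Fin 2)) :
    pairProd A (σ * (pairEquiv n).permCongr (π.prodCongr β)) = pairProd A σ := by
  have hβ : β 0 = 0 ∧ β 1 = 1 ∨ β 0 = 1 ∧ β 1 = 0 := by
    have := β.injective.ne (show (0 : Fin 2) ≠ 1 by decide)
    omega
  simp only [pairProd, Perm.mul_apply, permCongr_apply, symm_apply_apply, prodCongr_apply,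
    Prod.map]
  refine Fintype.prod_equiv π _ _ fun k => ?_
  rcases hβ with ⟨h0, h1⟩ | ⟨h0, h1⟩ <;> rw [h0, h1]
  exact hA.apply _ _

lemma sum_pairProd_filter_apply_eq {n : ℕ} {A : Matrix (Fin (2 * n)) (Fin (2 * n)) ℝ}
    (hA : A.IsSymm) (i p q : Fin (2 * n)) :
    ∑ σ with σ p = i, pairProd A σ = ∑ σ with σ q = i, pairProd A σ := by
  obtain ⟨⟨k, b⟩, rfl⟩ := (pairEquiv n).surjective p
  obtain ⟨⟨l, c⟩, rfl⟩ := (pairEquiv n).surjective q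
  set τ := (pairEquiv n).permCongr ((swap l k).prodCongr (swap c b))
  have hτ : τ (pairEquiv n (l, c)) = pairEquiv n (k, b) := by simp [τ, permCongr_apply]
  refine sum_equiv (Equiv.mulRight τ) (fun σ => by simp [hτ]) fun σ _ => ?_
  exact (pairProd_mul_permCongr hA σ _ _).symm

lemma hafnSum_eq_mul_sum_filter {n : ℕ} {A : Matrix (Fin (2 * n)) (Fin (2 * n)) ℝ}
    (hA : A.IsSymm) (i p : Fin (2 * n)) :
    hafnSum A = 2 * n * ∑ σ with σ p = i, pairProd A σ := by
  rw [hafnSum, ← sum_fiberwise univ (fun σ : Perm (Fin (2 * n)) => σ⁻¹ i) (pairProd A)]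
  simp only [Perm.inv_eq_iff_eq, eq_comm (a := i)]
  rw [sum_congr rfl fun q _ => sum_pairProd_filter_apply_eq hA i q p]
  simp

/-- `decomposeFin.symm (i, decomposeFin.symm (w, ρ))` sends `0 ↦ i`, `1 ↦ swap 0 i w.succ` and
`x + 2 ↦ peelEmb i w (ρ x)`. -/
def peelEmb {n : ℕ} (i : Fin (2 * (n + 1))) (w : Fin (2 * n + 1)) (x : Fin (2 * n)) :
    Fin (2 * (n + 1)) :=
  swap 0 i (swap 0 w x.succ).succ

lemma pairProd_decomposeFin_symm {n : ℕ} (A : Matrix (Fin (2 * (n + 1))) (Fin (2 * (n + 1))) ℝ)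
    (i : Fin (2 * (n + 1))) (w : Fin (2 * n + 1)) (ρ : Perm (Fin (2 * n))) :
    pairProd A (Perm.decomposeFin.symm (i, Perm.decomposeFin.symm (w, ρ))) =
      A i (swap 0 i w.succ) * pairProd (A.submatrix (peelEmb i w) (peelEmb i w)) ρ := by
  rw [pairProd, Fin.prod_univ_succ]
  congr 1
  · simp [pairEquiv_zero]
  · simp [pairEquiv_succ, pairProd, peelEmb]

lemma sum_pairProd_filter_apply_zero {n : ℕ}
    (A : Matrix (Fin (2 * (n + 1))) (Fin (2 * (n + 1))) ℝ) (i : Fin (2 * (n + 1))) :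
    ∑ σ with σ 0 = i, pairProd A σ =
      ∑ w : Fin (2 * n + 1),
        A i (swap 0 i w.succ) * hafnSum (A.submatrix (peelEmb i w) (peelEmb i w)) := by
  calc ∑ σ with σ 0 = i, pairProd A σ
      = ∑ pτ : Fin (2 * (n + 1)) × Perm (Fin (2 * n + 1)),
          if pτ.1 = i then pairProd A (Perm.decomposeFin.symm pτ) else 0 := by
        rw [sum_filter]
        refine (Fintype.sum_equiv Perm.decomposeFin.symm _ _ fun ⟨p, τ⟩ => ?_).symm
        rw [show Perm.decomposeFin.symm (p, τ) 0 = p from Perm.decomposeFin_symm_apply_zero p τ]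
    _ = ∑ τ : Perm (Fin (2 * n + 1)), pairProd A (Perm.decomposeFin.symm (i, τ)) := by
        rw [Fintype.sum_prod_type, Fintype.sum_eq_single i fun p hp => by simp [hp]]
        simp
    _ = ∑ w : Fin (2 * n + 1), ∑ ρ : Perm (Fin (2 * n)),
          pairProd A (Perm.decomposeFin.symm (i, Perm.decomposeFin.symm (w, ρ))) := by
        rw [← Fintype.sum_prod_type']
        exact (Fintype.sum_equiv Perm.decomposeFin.symm _ _ fun _ => rfl).symm
    _ = _ := by simp only [pairProd_decomposeFin_symm, hafnSum, mul_sum]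

lemma peelEmb_injective {n : ℕ} (i : Fin (2 * (n + 1))) (w : Fin (2 * n + 1)) :
    (peelEmb i w).Injective :=
  (swap 0 i).injective.comp <| (Fin.succ_injective _).comp <|
    (swap 0 w).injective.comp (Fin.succ_injective _)

lemma range_peelEmb {n : ℕ} (i : Fin (2 * (n + 1))) (w : Fin (2 * n + 1)) :
    Set.range (peelEmb i w) = {i, swap 0 i w.succ}ᶜ := by
  have : peelEmb i w = swap 0 i ∘ Fin.succ ∘ swap 0 w ∘ Fin.succ := rfl
  rw [this, Set.range_comp, Set.range_comp, Set.range_comp, Fin.range_succ,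
    Set.image_compl_eq (swap 0 w).bijective,
    Set.image_compl_eq_range_sdiff_image (Fin.succ_injective _),
    Fin.range_succ, Set.sdiff_eq, ← Set.compl_union, Set.image_compl_eq (swap 0 i).bijective]
  simp [Set.image_pair, Set.pair_comm]

/-- `hafn A(i,j)`, set to `0` for `i = j` so that the row expansion needs no hypothesis on
`A i i`. -/
noncomputable def hafnMinor {m : ℕ} (A : Matrix (Fin m) (Fin m) ℝ) (i j : Fin m) : ℝ :=
  if h : i ≠ j then hafn (delTwo A i j h) else 0

lemma hafnMinor_of_ne {m : ℕ} (A : Matrix (Fin m) (Fin m) ℝ) {i j : Fin m} (h : i ≠ j) :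
    hafnMinor A i j = hafn (delTwo A i j h) :=
  dif_pos h

lemma hafnMinor_eq_hafn_submatrix {m m' : ℕ} (A : Matrix (Fin m) (Fin m) ℝ) {i j : Fin m}
    (h : i ≠ j) {f : Fin m' → Fin m} (hf : f.Injective) (hrange : Set.range f = {i, j}ᶜ) :
    hafnMinor A i j = hafn (A.submatrix f f) := by
  rw [hafnMinor_of_ne A h]
  exact hafn_submatrix_eq_of_range_eq A (orderEmbOfFin _ _).injective hf
    (by rw [range_orderEmbOfFin, hrange]; ext; simp [and_comm])

lemma hafn_eq_sum_mul_hafnMinor {n : ℕ} {A : Matrix (Fin (2 * (n + 1))) (Fin (2 * (n + 1))) ℝ}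
    (hA : A.IsSymm) (i : Fin (2 * (n + 1))) :
    hafn A = ∑ j, A i j * hafnMinor A i j := by
  have hpeel : hafn A = ∑ w : Fin (2 * n + 1),
      A i (swap 0 i w.succ) * hafn (A.submatrix (peelEmb i w) (peelEmb i w)) := by
    simp only [hafn_eq_hafnSum_div, hafnSum_eq_mul_sum_filter hA i 0,
      sum_pairProd_filter_apply_zero, mul_sum, sum_div]
    refine sum_congr rfl fun w _ => ?_
    rw [Nat.factorial_succ]
    push_cast
    field_simp
    ring
  refine hpeel.trans (Eq.symm <|
    (Fin.sum_univ_eq_add_sum_swap_zero_succ i fun j => A i j * hafnMinor A i j).trans ?_)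
  rw [hafnMinor, dif_neg (not_not.2 rfl), mul_zero, zero_add]
  refine sum_congr rfl fun w _ => ?_
  rw [hafnMinor_eq_hafn_submatrix A _ (peelEmb_injective i w) (range_peelEmb i w)]
  rw [Ne, eq_comm, swap_apply_eq_iff, swap_apply_right]
  exact Fin.succ_ne_zero w

lemma hafn_nonneg {m : ℕ} {A : Matrix (Fin m) (Fin m) ℝ} (hA : ∀ i j, 0 ≤ A i j) :
    0 ≤ hafn A :=
  div_nonneg (sum_nonneg fun _ _ => prod_nonneg fun _ _ => hA _ _) (by positivity)

lemma hafnMinor_nonneg {m : ℕ} {A : Matrix (Fin m) (Fin m) ℝ} (hA : ∀ i j, 0 ≤ A i j)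
    (i j : Fin m) : 0 ≤ hafnMinor A i j := by
  unfold hafnMinor
  split_ifs
  exacts [hafn_nonneg fun _ _ => hA _ _, le_rfl]

theorem hafn_pow_le (n : ℕ) (A : Matrix (Fin (2 * n)) (Fin (2 * n)) ℝ)
    (hA : A.IsSymm) (h01 : ∀ i j, A i j = 0 ∨ A i j = 1) (hdiag : ∀ i, A i i = 0)
    (r : Fin (2 * n) → ℝ) (hr : ∀ i, r i = ∑ j, A i j) (i : Fin (2 * n)) :
    hafn A ^ hafn A ≤
      r i ^ hafn A *
        ∏ j ∈ (Finset.univ.filter fun j => A i j = 1).attach,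
          hafn (delTwo A i j.1
              (by
                have h1 : A i j.1 = 1 := (Finset.mem_filter.mp j.2).2
                intro he
                rw [← he, hdiag i] at h1
                norm_num at h1)) ^
            hafn (delTwo A i j.1
              (by
                have h1 : A i j.1 = 1 := (Finset.mem_filter.mp j.2).2
                intro he
                rw [← he, hdiag i] at h1
                norm_num at h1)) := by
  obtain _ | n := n
  · exact i.elim0
  have hnonneg : ∀ x y, 0 ≤ A x y := fun x y => by rcases h01 x y with h | h <;> simp [h]
  set S := univ.filter fun j => A i j = 1
  have hrow : ∀ j, A i j = if j ∈ S then 1 else 0 := fun j => by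
    rcases h01 i j with h | h <;> simp [S, h]
  have hsum : hafn A = ∑ j ∈ S, hafnMinor A i j := by
    simp only [hafn_eq_sum_mul_hafnMinor hA i, hrow, ite_mul, one_mul, zero_mul, sum_ite_mem,
      univ_inter]
  have hcard : r i = #S := by simp [hr, hrow]
  rw [hsum, hcard]
  convert sum_rpow_sum_le S fun j _ => hafnMinor_nonneg hnonneg i j using 2
  rw [← prod_attach S (fun j => hafnMinor A i j ^ hafnMinor A i j)]
  exact prod_congr rfl fun j _ => congrArg (fun x => x ^ x) (hafnMinor_of_ne A _).symm
end
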